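/- For every set Γ of L≻-formulas and every L≻-formula φ: (i) if Γ ∪ {φ} is inconsistent, then Γ ⊢_LCR ¬J₁(φ); and (ii) if Γ ∪ {¬J₁(φ)} is inconsistent, then Γ ⊢_LCR φ. -/

import Mathlib

namespace LCR

/-- Łukasiewicz negation on ℝ. -/
noncomputable def lneg (a : ℝ) : ℝ := 1 - a

/-- Łukasiewicz implication on ℝ. -/
noncomputable def limp (a b : ℝ) : ℝ := min 1 (1 - a + b)

/-- Łukasiewicz strong conjunction ⊙ on ℝ. -/
noncomputable def lodot (a b : ℝ) : ℝ := max 0 (a + b - 1)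

/-- The truth-value set T = {0, 1/(m−1), …, 1}. -/
def Tset (m : ℕ) : Set ℝ := {a | ∃ i : Fin m, a = (i : ℝ) / ((m : ℝ) - 1)}

/-- The k-th truth value k/(m−1). -/
noncomputable def tv (m : ℕ) (k : Fin m) : ℝ := (k : ℝ) / ((m : ℝ) - 1)

/-- Formulas of the language L≻. -/
inductive Formula : Type where
  | var  : ℕ → Formula
  | neg  : Formula → Formula
  | imp  : Formula → Formula → Formula
  | cond : Formula → Formula → Formula
deriving DecidableEq

namespace Formula
/-- φ ∨ ψ := (φ → ψ) → ψ. -/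
def or (φ ψ : Formula) : Formula := .imp (.imp φ ψ) ψ
/-- φ ∧ ψ := ¬(¬φ ∨ ¬ψ). -/
def and (φ ψ : Formula) : Formula := .neg (Formula.or (.neg φ) (.neg ψ))
/-- φ ↔ ψ := (φ → ψ) ∧ (ψ → φ). -/
def iff (φ ψ : Formula) : Formula := Formula.and (.imp φ ψ) (.imp ψ φ)
end Formula

/-- Purely propositional (¬,→)-formulas. -/
inductive PForm : Type where
  | var : ℕ → PForm
  | neg : PForm → PForm
  | imp : PForm → PForm → PForm

/-- Evaluation of a propositional formula under an assignment. -/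
noncomputable def PForm.eval (σ : ℕ → ℝ) : PForm → ℝ
  | .var n => σ n
  | .neg φ => lneg (PForm.eval σ φ)
  | .imp φ ψ => limp (PForm.eval σ φ) (PForm.eval σ ψ)

/-- Tautology of Łukasiewicz m-valued propositional logic. -/
def PForm.Taut (m : ℕ) (φ : PForm) : Prop :=
  ∀ σ : ℕ → ℝ, (∀ n, σ n ∈ Tset m) → PForm.eval σ φ = 1

/-- Substitution of L≻-formulas for the variables of a propositional formula. -/
def PForm.subst (σ : ℕ → Formula) : PForm → Formula
  | .var n => σ n
  | .neg φ => .neg (PForm.subst σ φ)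
  | .imp φ ψ => .imp (PForm.subst σ φ) (PForm.subst σ ψ)

/-- `J` is a family of Rosser–Turquette J-operators: each `J a` is obtained by substitution
into a (¬,→)-definable one-place connective whose value is 1 at inputs equal to `tv m a`
and 0 at all other truth values. -/
def IsJFamily (m : ℕ) (J : Fin m → Formula → Formula) : Prop :=
  ∃ P : Fin m → PForm,
    (∀ a φ, J a φ = PForm.subst (fun _ => φ) (P a)) ∧
    (∀ (a : Fin m) (σ : ℕ → ℝ), (∀ n, σ n ∈ Tset m) →
      PForm.eval σ (P a) = if σ 0 = tv m a then 1 else 0)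

/-- `I` is a family of threshold operators: each `I a` is obtained by substitution into a
(¬,→)-definable one-place connective whose value is 1 at inputs ≥ `tv m a` and 0 otherwise. -/
def IsIFamily (m : ℕ) (I : Fin m → Formula → Formula) : Prop :=
  ∃ P : Fin m → PForm,
    (∀ a φ, I a φ = PForm.subst (fun _ => φ) (P a)) ∧
    (∀ (a : Fin m) (σ : ℕ → ℝ), (∀ n, σ n ∈ Tset m) →
      PForm.eval σ (P a) = if tv m a ≤ σ 0 then 1 else 0)

/-- The index of aᵢ = (m−i)/(m−1) for i = j+1, i.e. m−1−j. -/
def revIdx {m : ℕ} (j : Fin m) : Fin m := ⟨m - 1 - j.1, by have := j.isLt; omega⟩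

/-- Index-level strong conjunction: tv (odotIdx a b) = tv a ⊙ tv b. -/
def odotIdx {m : ℕ} (a b : Fin m) : Fin m :=
  ⟨a.1 + b.1 - (m - 1), by have := a.isLt; have := b.isLt; omega⟩

/-- Nested implication →ⁿᵢ₌₁(φᵢ, ψ) = φₙ → (φₙ₋₁ → (⋯ → (φ₁ → ψ))), with φᵢ = f (i−1). -/
def nestImp : (n : ℕ) → (Fin n → Formula) → Formula → Formula
  | 0, _, ψ => ψ
  | n+1, f, ψ => .imp (f (Fin.last n)) (nestImp n (fun i => f i.castSucc) ψ)

/-- Theorems of the system LCR (relative to the I-operators used in the rules R_a). -/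
inductive Thm (m : ℕ) (I : Fin m → Formula → Formula) : Formula → Prop where
  | taut : ∀ (ψ : PForm) (σ : ℕ → Formula), PForm.Taut m ψ → Thm m I (PForm.subst σ ψ)
  | a1 : ∀ φ ψ θ : Formula,
      Thm m I (.imp (.cond φ (ψ.and θ)) ((Formula.cond φ ψ).and (.cond φ θ)))
  | a2 : ∀ φ ψ θ : Formula,
      Thm m I (.imp ((Formula.cond φ ψ).and (.cond φ θ)) (.cond φ (ψ.and θ)))
  | a3 : ∀ (φ : Formula) (p : ℕ), Thm m I (.cond φ (.imp (.var p) (.var p)))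
  | mp : ∀ φ ψ : Formula, Thm m I (.imp φ ψ) → Thm m I φ → Thm m I ψ
  | rcea : ∀ φ ψ θ : Formula,
      Thm m I (φ.iff ψ) → Thm m I ((Formula.cond φ θ).iff (.cond ψ θ))
  | rcec : ∀ φ ψ θ : Formula,
      Thm m I (φ.iff ψ) → Thm m I ((Formula.cond θ φ).iff (.cond θ ψ))
  | ra : ∀ (a : Fin m) (φ : Formula) (γ : Fin m → Formula) (δ : Formula),
      (∀ b : Fin m,
        Thm m I (nestImp m (fun j => I (odotIdx (revIdx j) b) (γ j)) (I (odotIdx a b) δ))) →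
      Thm m I (nestImp m (fun j => I (revIdx j) (.cond φ (γ j))) (I a (.cond φ δ)))

/-- Γ ⊢_LCR φ : derivability from Γ by theorems of LCR and modus ponens. -/
inductive Deriv (m : ℕ) (I : Fin m → Formula → Formula) (Γ : Set Formula) : Formula → Prop where
  | thm : ∀ φ, Thm m I φ → Deriv m I Γ φ
  | mem : ∀ φ, φ ∈ Γ → Deriv m I Γ φ
  | mp : ∀ φ ψ, Deriv m I Γ (.imp φ ψ) → Deriv m I Γ φ → Deriv m I Γ ψ

/-- A Kripke LCR model over a set of worlds W. -/
structure Model (m : ℕ) (W : Type) : Type where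
  ne : Nonempty W
  R : (Fin m → Set W) → W → W → ℝ
  R_mem : ∀ X x y, R X x y ∈ Tset m
  v : ℕ → W → ℝ
  v_mem : ∀ p x, v p x ∈ Tset m

/-- Valuation of formulas in a Kripke LCR model. -/
noncomputable def Model.val {m : ℕ} {W : Type} (M : Model m W) : Formula → W → ℝ
  | .var p, x => M.v p x
  | .neg φ, x => lneg (M.val φ x)
  | .imp φ ψ, x => limp (M.val φ x) (M.val ψ x)
  | .cond φ ψ, x =>
      sInf (Set.range fun y : W =>
        limp (M.R (fun i => {z : W | M.val φ z = tv m i}) x y) (M.val ψ y))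

/-- Semantic consequence Γ ⊨ φ over all Kripke LCR models. -/
def Entails (m : ℕ) (Γ : Set Formula) (φ : Formula) : Prop :=
  ∀ (W : Type) (M : Model m W) (x : W), (∀ ψ ∈ Γ, M.val ψ x = 1) → M.val φ x = 1

/-- Syntactic consistency. -/
def Consistent (m : ℕ) (I : Fin m → Formula → Formula) (Γ : Set Formula) : Prop :=
  ¬ ∃ φ : Formula, Deriv m I Γ φ ∧ Deriv m I Γ (.neg φ)

/-- Maximal consistency. -/
def MaxConsistent (m : ℕ) (I : Fin m → Formula → Formula) (Γ : Set Formula) : Prop :=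
  Consistent m I Γ ∧ ∀ φ : Formula, Deriv m I Γ φ → φ ∈ Γ


/-! ### Auxiliary material for Statement 16 -/

/-- Substitution of propositional formulas for variables, at the `PForm` level. -/
def PForm.psubst (σ : ℕ → PForm) : PForm → PForm
  | .var n => σ n
  | .neg φ => .neg (PForm.psubst σ φ)
  | .imp φ ψ => .imp (PForm.psubst σ φ) (PForm.psubst σ ψ)

lemma PForm.subst_psubst (σ : ℕ → Formula) (τ : ℕ → PForm) (ψ : PForm) :
    PForm.subst σ (PForm.psubst τ ψ) = PForm.subst (fun n => PForm.subst σ (τ n)) ψ := by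
  induction ψ with
  | var n => rfl
  | neg φ ih => simp [PForm.psubst, PForm.subst, ih]
  | imp φ ψ ih1 ih2 => simp [PForm.psubst, PForm.subst, ih1, ih2]

lemma PForm.eval_psubst (σ : ℕ → ℝ) (τ : ℕ → PForm) (ψ : PForm) :
    PForm.eval σ (PForm.psubst τ ψ) = PForm.eval (fun n => PForm.eval σ (τ n)) ψ := by
  induction ψ with
  | var n => rfl
  | neg φ ih => simp [PForm.psubst, PForm.eval, ih]
  | imp φ ψ ih1 ih2 => simp [PForm.psubst, PForm.eval, ih1, ih2]

lemma Tset.nonneg {m : ℕ} (hm : 2 ≤ m) {a : ℝ} (h : a ∈ Tset m) : 0 ≤ a := by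
  obtain ⟨i, rfl⟩ := h
  have h2 : (2:ℝ) ≤ (m:ℝ) := by exact_mod_cast hm
  apply div_nonneg (by positivity) (by linarith)

lemma Tset.le_one {m : ℕ} (hm : 2 ≤ m) {a : ℝ} (h : a ∈ Tset m) : a ≤ 1 := by
  obtain ⟨i, rfl⟩ := h
  have h1 : (0:ℝ) < (m:ℝ) - 1 := by
    have : (2:ℝ) ≤ (m:ℝ) := by exact_mod_cast hm
    linarith
  rw [div_le_one h1]
  have hi : (i:ℕ) ≤ m - 1 := by have := i.isLt; omega
  have : ((i:ℕ):ℝ) ≤ ((m - 1 : ℕ):ℝ) := by exact_mod_cast hi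
  push_cast [Nat.cast_sub (by omega : 1 ≤ m)] at this
  linarith

lemma Tset.zero_mem {m : ℕ} (hm : 2 ≤ m) : (0:ℝ) ∈ Tset m :=
  ⟨⟨0, by omega⟩, by simp⟩

lemma Tset.one_mem {m : ℕ} (hm : 2 ≤ m) : (1:ℝ) ∈ Tset m := by
  refine ⟨⟨m - 1, by omega⟩, ?_⟩
  have h1 : ((m:ℝ) - 1) ≠ 0 := by
    have : (2:ℝ) ≤ (m:ℝ) := by exact_mod_cast hm
    linarith
  rw [eq_comm, div_eq_one_iff_eq h1]
  push_cast [Nat.cast_sub (by omega : 1 ≤ m)]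
  ring

lemma tv_top {m : ℕ} (hm : 2 ≤ m) : tv m ⟨m - 1, Nat.sub_lt (by omega : 0 < m) Nat.one_pos⟩ = 1 := by
  have h1 : ((m:ℝ) - 1) ≠ 0 := by
    have : (2:ℝ) ≤ (m:ℝ) := by exact_mod_cast hm
    linarith
  unfold tv
  rw [div_eq_one_iff_eq h1]
  push_cast [Nat.cast_sub (by omega : 1 ≤ m)]
  ring
lemma limp_eq_one {a b : ℝ} (h : a ≤ b) : limp a b = 1 :=
  min_eq_left (by linarith)

lemma limp_nonneg {a b : ℝ} (ha : a ≤ 1) (hb : 0 ≤ b) : 0 ≤ limp a b :=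
  le_min (by norm_num) (by linarith)

lemma limp_le_one (a b : ℝ) : limp a b ≤ 1 := min_le_left _ _

lemma limp_one_left {b : ℝ} (hb : b ≤ 1) : limp 1 b = b := by
  unfold limp; rw [show (1:ℝ) - 1 + b = b by ring, min_eq_right hb]

lemma limp_zero_left {b : ℝ} (hb : 0 ≤ b) : limp 0 b = 1 := by
  unfold limp; rw [show (1:ℝ) - 0 + b = 1 + b by ring]
  exact min_eq_left (by linarith)

/-- Deduction theorem: if `Γ ∪ {φ} ⊢ ψ` then `Γ ⊢ B(φ) → ψ`, where `B` is a
propositional one-place connective (in variable 0) that is crisp with value 1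
exactly at input 1 (e.g. `J₁`). -/
lemma deduction (m : ℕ) (hm : 2 ≤ m) (I : Fin m → Formula → Formula)
    (Γ : Set Formula) (φ : Formula) (B : PForm)
    (hBval : ∀ σ : ℕ → ℝ, (∀ n, σ n ∈ Tset m) →
      PForm.eval σ B = if σ 0 = 1 then 1 else 0)
    (hBsub : ∀ σ : ℕ → Formula, PForm.subst σ B = PForm.subst (fun _ => σ 0) B)
    {ψ : Formula} (h : Deriv m I (Γ ∪ {φ}) ψ) :
    Deriv m I Γ (.imp (PForm.subst (fun _ => φ) B) ψ) := by
  induction h with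
  | thm θ ht =>
      have hk : Thm m I (PForm.subst (fun n => if n = 0 then φ else θ)
          (.imp (.var 1) (.imp B (.var 1)))) := by
        apply Thm.taut
        intro σ hσ
        have hq0 := Tset.nonneg hm (hσ 1)
        have hq1 := Tset.le_one hm (hσ 1)
        have hB := hBval σ hσ
        simp only [PForm.eval, limp, lneg, hB]
        by_cases h0 : σ 0 = 1 <;>
          simp only [h0, if_true, if_false, reduceIte] <;>
          · simp only [min_def]; split_ifs <;> linarith
      have heq : PForm.subst (fun n => if n = 0 then φ else θ)
          (.imp (.var 1) (.imp B (.var 1)))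
          = .imp θ (.imp (PForm.subst (fun _ => φ) B) θ) := by
        simp [PForm.subst, hBsub (fun n => if n = 0 then φ else θ)]
      rw [heq] at hk
      exact Deriv.mp _ _ (Deriv.thm _ hk) (Deriv.thm _ ht)
  | mem θ hmem =>
      rcases hmem with hmem | hmem
      · have hk : Thm m I (PForm.subst (fun n => if n = 0 then φ else θ)
            (.imp (.var 1) (.imp B (.var 1)))) := by
          apply Thm.taut
          intro σ hσ
          have hq0 := Tset.nonneg hm (hσ 1)
          have hq1 := Tset.le_one hm (hσ 1)
          have hB := hBval σ hσ
          simp only [PForm.eval, limp, lneg, hB]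
          by_cases h0 : σ 0 = 1 <;>
            simp only [h0, if_true, if_false, reduceIte] <;>
            · simp only [min_def]; split_ifs <;> linarith
        have heq : PForm.subst (fun n => if n = 0 then φ else θ)
            (.imp (.var 1) (.imp B (.var 1)))
            = .imp θ (.imp (PForm.subst (fun _ => φ) B) θ) := by
          simp [PForm.subst, hBsub (fun n => if n = 0 then φ else θ)]
        rw [heq] at hk
        exact Deriv.mp _ _ (Deriv.thm _ hk) (Deriv.mem _ hmem)
      · have hθ : θ = φ := hmem
        rw [hθ]
        have hk : Thm m I (PForm.subst (fun _ => φ) (.imp B (.var 0))) := by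
          apply Thm.taut
          intro σ hσ
          have hq0 := Tset.nonneg hm (hσ 0)
          have hB := hBval σ hσ
          simp only [PForm.eval, limp, lneg, hB]
          by_cases h0 : σ 0 = 1 <;>
            simp only [h0, if_true, if_false, reduceIte] <;>
            · simp only [min_def]; split_ifs <;> linarith
        exact Deriv.thm _ hk
  | mp α β h1 h2 ih1 ih2 =>
      have hk : Thm m I (PForm.subst (fun n => if n = 1 then α else if n = 2 then β else φ)
          (.imp (.imp B (.imp (.var 1) (.var 2)))
            (.imp (.imp B (.var 1)) (.imp B (.var 2))))) := by
        apply Thm.taut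
        intro σ hσ
        have hq0 := Tset.nonneg hm (hσ 1)
        have hq1 := Tset.le_one hm (hσ 1)
        have hr0 := Tset.nonneg hm (hσ 2)
        have hr1 := Tset.le_one hm (hσ 2)
        have hB := hBval σ hσ
        simp only [PForm.eval]
        rw [hB]
        by_cases h0 : σ 0 = 1
        · rw [if_pos h0, limp_one_left (limp_le_one _ _), limp_one_left hq1,
            limp_one_left hr1]
          exact limp_eq_one le_rfl
        · rw [if_neg h0, limp_zero_left (limp_nonneg hq1 hr0),
            limp_zero_left hq0, limp_zero_left hr0, limp_eq_one (le_refl (1:ℝ))]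
          exact limp_eq_one le_rfl
      have heq : PForm.subst (fun n => if n = 1 then α else if n = 2 then β else φ)
          (.imp (.imp B (.imp (.var 1) (.var 2)))
            (.imp (.imp B (.var 1)) (.imp B (.var 2))))
          = .imp (.imp (PForm.subst (fun _ => φ) B) (.imp α β))
              (.imp (.imp (PForm.subst (fun _ => φ) B) α)
                (.imp (PForm.subst (fun _ => φ) B) β)) := by
        simp [PForm.subst, hBsub (fun n => if n = 1 then α else if n = 2 then β else φ)]
      rw [heq] at hk
      exact Deriv.mp _ _ (Deriv.mp _ _ (Deriv.thm _ hk) ih1) ih2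
/-- If `Γ ∪ {φ}` is inconsistent then `Γ ⊢ ¬B(φ)`, for a crisp `B` as in `deduction`. -/
lemma inconsistent_neg (m : ℕ) (hm : 2 ≤ m) (I : Fin m → Formula → Formula)
    (Γ : Set Formula) (φ : Formula) (B : PForm)
    (hBval : ∀ σ : ℕ → ℝ, (∀ n, σ n ∈ Tset m) →
      PForm.eval σ B = if σ 0 = 1 then 1 else 0)
    (hBsub : ∀ σ : ℕ → Formula, PForm.subst σ B = PForm.subst (fun _ => σ 0) B)
    (hinc : ¬ Consistent m I (Γ ∪ {φ})) :
    Deriv m I Γ (.neg (PForm.subst (fun _ => φ) B)) := by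
  rw [Consistent, not_not] at hinc
  obtain ⟨θ, h1, h2⟩ := hinc
  have d1 := deduction m hm I Γ φ B hBval hBsub h1
  have d2 := deduction m hm I Γ φ B hBval hBsub h2
  have hk : Thm m I (PForm.subst (fun n => if n = 0 then φ else θ)
      (.imp (.imp B (.var 1)) (.imp (.imp B (.neg (.var 1))) (.neg B)))) := by
    apply Thm.taut
    intro σ hσ
    have hq0 := Tset.nonneg hm (hσ 1)
    have hq1 := Tset.le_one hm (hσ 1)
    have hB := hBval σ hσ
    simp only [PForm.eval]
    rw [hB]
    by_cases h0 : σ 0 = 1 <;>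
      [rw [if_pos h0]; rw [if_neg h0]] <;>
      · simp only [limp, lneg, min_def]; split_ifs <;> linarith
  have heq : PForm.subst (fun n => if n = 0 then φ else θ)
      (.imp (.imp B (.var 1)) (.imp (.imp B (.neg (.var 1))) (.neg B)))
      = .imp (.imp (PForm.subst (fun _ => φ) B) θ)
          (.imp (.imp (PForm.subst (fun _ => φ) B) (.neg θ))
            (.neg (PForm.subst (fun _ => φ) B))) := by
    simp [PForm.subst, hBsub (fun n => if n = 0 then φ else θ)]
  rw [heq] at hk
  exact Deriv.mp _ _ (Deriv.mp _ _ (Deriv.thm _ hk) d1) d2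
/-- (i) if Γ ∪ {φ} is inconsistent then Γ ⊢ ¬J₁(φ);
(ii) if Γ ∪ {¬J₁(φ)} is inconsistent then Γ ⊢ φ. -/
theorem inconsistent_J_top (m : ℕ) (hm : 2 ≤ m)
    (J : Fin m → Formula → Formula) (hJ : IsJFamily m J)
    (I : Fin m → Formula → Formula) (hI : IsIFamily m I)
    (Γ : Set Formula) (φ : Formula) :
    (¬ Consistent m I (Γ ∪ {φ}) →
      Deriv m I Γ (.neg (J ⟨m - 1, by omega⟩ φ))) ∧
    (¬ Consistent m I (Γ ∪ {Formula.neg (J ⟨m - 1, by omega⟩ φ)}) →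
      Deriv m I Γ φ) := by
  obtain ⟨P, hPsub, hPval⟩ := hJ
  have htop : m - 1 < m := by omega
  set top : Fin m := ⟨m - 1, htop⟩ with htopdef
  set P0 : PForm := PForm.psubst (fun _ => .var 0) (P top) with hP0
  have hP0val : ∀ σ : ℕ → ℝ, (∀ n, σ n ∈ Tset m) →
      PForm.eval σ P0 = if σ 0 = 1 then 1 else 0 := by
    intro σ hσ
    rw [hP0, PForm.eval_psubst]
    have h := hPval top (fun _ => σ 0) (fun _ => hσ 0)
    rw [tv_top hm] at h
    exact h
  have hP0sub : ∀ σ : ℕ → Formula, PForm.subst σ P0 = PForm.subst (fun _ => σ 0) P0 := by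
    intro σ
    rw [hP0, PForm.subst_psubst, PForm.subst_psubst]
    rfl
  have hP0J : ∀ ψ : Formula, PForm.subst (fun _ => ψ) P0 = J top ψ := by
    intro ψ
    rw [hP0, PForm.subst_psubst, hPsub top ψ]
    rfl
  constructor
  · intro hinc
    have h := inconsistent_neg m hm I Γ φ P0 hP0val hP0sub hinc
    rwa [hP0J] at h
  · intro hinc
    set χ : Formula := .neg (J top φ) with hχdef
    have hχ := inconsistent_neg m hm I Γ χ P0 hP0val hP0sub hinc
    rw [hP0J] at hχ
    set Q : PForm := PForm.psubst (fun _ => .neg P0) (P top) with hQ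
    have hQsub : PForm.subst (fun _ => φ) (PForm.neg Q) = Formula.neg (J top χ) := by
      show Formula.neg _ = _
      congr 1
      rw [hQ, PForm.subst_psubst]
      have h1 : (fun n : ℕ => PForm.subst (fun _ => φ) (PForm.neg P0))
          = fun _ : ℕ => χ := by
        funext n
        show Formula.neg (PForm.subst (fun _ => φ) P0) = χ
        rw [hP0J]
      rw [h1, ← hPsub top χ]
    have hk : Thm m I (PForm.subst (fun _ => φ) (.imp (.neg Q) (.var 0))) := by
      apply Thm.taut
      intro σ hσ
      have h00 := Tset.nonneg hm (hσ 0)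
      have hQval : PForm.eval σ Q = if σ 0 = 1 then 0 else 1 := by
        rw [hQ, PForm.eval_psubst]
        have he : PForm.eval σ (PForm.neg P0) = if σ 0 = 1 then 0 else 1 := by
          show lneg (PForm.eval σ P0) = _
          rw [hP0val σ hσ]
          unfold lneg
          split_ifs <;> ring
        have hmem : ∀ n : ℕ, (fun _ : ℕ => PForm.eval σ (PForm.neg P0)) n ∈ Tset m := by
          intro n
          simp only [he]
          split_ifs
          · exact Tset.zero_mem hm
          · exact Tset.one_mem hm
        rw [hPval top _ hmem, tv_top hm]
        simp only [he]
        split_ifs with h1 h2 h3 <;> norm_num at *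
      simp only [PForm.eval]
      rw [hQval]
      apply limp_eq_one
      by_cases h0 : σ 0 = 1
      · rw [if_pos h0, h0]; unfold lneg; norm_num
      · rw [if_neg h0]; unfold lneg; norm_num; exact h00
    have heq : PForm.subst (fun _ => φ) (PForm.imp (.neg Q) (.var 0))
        = .imp (Formula.neg (J top χ)) φ := by
      show Formula.imp _ _ = _
      rw [hQsub]
      rfl
    rw [heq] at hk
    exact Deriv.mp _ _ (Deriv.thm _ hk) hχ

end LCR
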